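/- arXiv:2310.02551 — 4 statements merged into one kernel-verified Lean document; each statement's English description precedes it below -/
import Mathlib

section
/- Let 𝒢 be a hereditary class of simple graphs whose forbidden induced subgraphs all have at most c vertices. Then every forbidden induced subgraph for the apex class 𝒢^apex (graphs G containing a vertex v with G−v ∈ 𝒢) has at most ⌊(c+2)²/4⌋ vertices. -/
open SimpleGraph

/-- A property of finite simple graphs. -/
abbrev GraphProp : Type 1 := ∀ (V : Type) [Finite V], SimpleGraph V → Prop

/-- A class of finite simple graphs: a property closed under isomorphism. -/
structure GraphClass : Type 1 where
  Mem : GraphProp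
  iso_closed : ∀ (V W : Type) [Finite V] [Finite W] (G : SimpleGraph V) (H : SimpleGraph W),
      Nonempty (G ≃g H) → Mem V G → Mem W H

/-- A property is hereditary if it is closed under taking induced subgraphs. -/
def Hereditary (P : GraphProp) : Prop :=
  ∀ (V : Type) [Finite V] (G : SimpleGraph V) (s : Set V), P V G → P s (G.induce s)

/-- `H` is a forbidden induced subgraph for `P`: it does not satisfy `P` but every
proper induced subgraph of it does. -/
def Forb (P : GraphProp) {V : Type} [Finite V] (H : SimpleGraph V) : Prop :=
  ¬ P V H ∧ ∀ s : Set V, s ≠ Set.univ → P s (H.induce s)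

/-- Membership in the apex class of `𝒢`: graphs containing a vertex whose deletion
lands in `𝒢` (together with the empty graph). -/
def ApexMem (𝒢 : GraphClass) : GraphProp :=
  fun V _ G => IsEmpty V ∨ ∃ v : V, 𝒢.Mem {u : V | u ≠ v} (G.induce {u : V | u ≠ v})

/-!
Let `G` be a forbidden induced subgraph of the apex class on `n ≥ 2` vertices, and join two
vertices `x ≠ y` in an auxiliary graph `M` when `G - x - y ∈ 𝒢`. Every proper induced subgraph
of `G` is apex, so every vertex has an `M`-neighbour. Since `G - v ∉ 𝒢`, it contains a forbidden
induced subgraph of `𝒢` with at most `c` vertices; by heredity it meets every `M`-edge, so its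
complement is an `M`-independent set of size at least `n - c` through `v`.

A graph without isolated vertices in which every vertex lies in an independent set of size at
least `n - c` has at most `⌊(c+2)²/4⌋` vertices. Fix a maximum independent set `I`, let
`τ = n - |I|`, and for `w ∉ I` extend an independent set of size at least `n - c` through `w` to a
maximal independent set `T_w`. Maximality of `I` makes the Hall surplus `|N_I(K)| - |K|`
nonnegative for independent `K` disjoint from `I`, hence subadditive on unions of such sets. The
sets `T_w \ I` cover `V \ I` and have surplus `|I| - |T_w|`, while `V \ I` has surplus `|I| - τ`,
so `|I| - τ ≤ τ (|I| - |T_w|)` for some `w`. Then `n ≤ τ (|I| - |T_w| + 2)` with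
`τ + (|I| - |T_w| + 2) ≤ c + 2`, and AM-GM gives the bound.
-/

open Finset

theorem Nat.le_sq_div_four_of_le_mul {n x y s : ℕ} (hn : n ≤ x * y) (hs : x + y ≤ s) :
    n ≤ s ^ 2 / 4 := by
  rw [Nat.le_div_iff_mul_le four_pos]
  nlinarith [sq_nonneg ((x : ℤ) - y)]

namespace SimpleGraph

variable {V : Type*} (M : SimpleGraph V) [DecidableRel M.Adj]

def neighborsIn (I K : Finset V) : Finset V := {u ∈ I | ∃ x ∈ K, M.Adj x u}

def surplus (I K : Finset V) : ℤ := #(M.neighborsIn I K) - #K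

variable {M} [DecidableEq V]

lemma neighborsIn_union (I A B : Finset V) :
    M.neighborsIn I (A ∪ B) = M.neighborsIn I A ∪ M.neighborsIn I B := by
  ext u
  simp only [neighborsIn, mem_filter, mem_union, or_and_right, exists_or, and_or_left]

lemma neighborsIn_inter_subset (I A B : Finset V) :
    M.neighborsIn I (A ∩ B) ⊆ M.neighborsIn I A ∩ M.neighborsIn I B := by
  intro u
  simp only [neighborsIn, mem_filter, mem_inter]
  rintro ⟨hu, x, ⟨hxA, hxB⟩, hxu⟩
  exact ⟨⟨hu, x, hxA, hxu⟩, hu, x, hxB, hxu⟩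

lemma surplus_union_le {I A B : Finset V} (h : 0 ≤ M.surplus I (A ∩ B)) :
    M.surplus I (A ∪ B) ≤ M.surplus I A + M.surplus I B := by
  have hN := card_union_add_card_inter (M.neighborsIn I A) (M.neighborsIn I B)
  have hK := card_union_add_card_inter A B
  have hNAB := card_le_card (neighborsIn_inter_subset (M := M) I A B)
  rw [← neighborsIn_union] at hN
  unfold surplus at *
  omega

lemma surplus_biUnion_le {ι : Type*} [DecidableEq ι] {I : Finset V} (S : Finset ι)
    (K : ι → Finset V) (hK : ∀ i ∈ S, ∀ B ⊆ K i, 0 ≤ M.surplus I B) :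
    M.surplus I (S.biUnion K) ≤ ∑ i ∈ S, M.surplus I (K i) := by
  induction S using Finset.induction_on with
  | empty => simp [surplus, neighborsIn]
  | insert i S hiS ih =>
    rw [biUnion_insert, sum_insert hiS]
    have hS := ih fun j hj => hK j (mem_insert_of_mem hj)
    have hi := surplus_union_le (B := S.biUnion K) (hK i (mem_insert_self i S) _ inter_subset_left)
    linarith

lemma exists_adj_of_maximal_isIndepSet {T : Finset V}
    (hT : Maximal (fun s : Finset V => M.IsIndepSet s) T) {u : V} (hu : u ∉ T) :
    ∃ x ∈ T, M.Adj x u := by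
  by_contra! h
  have hins : M.IsIndepSet (insert u T : Finset V) := by
    rw [coe_insert]
    exact hT.prop.insert fun x hx _ => ⟨fun hux => h x hx hux.symm, h x hx⟩
  exact hu (hT.2 hins (subset_insert u T) (mem_insert_self u T))

lemma surplus_sdiff_of_maximal {I T : Finset V} (hI : M.IsIndepSet I)
    (hT : Maximal (fun s : Finset V => M.IsIndepSet s) T) :
    M.surplus I (T \ I) = #I - #T := by
  have hN : M.neighborsIn I (T \ I) = I \ T := by
    ext u
    simp only [neighborsIn, mem_filter, mem_sdiff]
    constructor
    · rintro ⟨huI, x, ⟨hxT, -⟩, hxu⟩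
      exact ⟨huI, fun huT => hT.prop hxT huT (M.ne_of_adj hxu) hxu⟩
    · rintro ⟨huI, huT⟩
      obtain ⟨x, hxT, hxu⟩ := exists_adj_of_maximal_isIndepSet hT huT
      exact ⟨huI, x, ⟨hxT, fun hxI => hI hxI huI (M.ne_of_adj hxu) hxu⟩, hxu⟩
  have hI' := card_sdiff_add_card_inter I T
  have hT' := card_sdiff_add_card_inter T I
  rw [inter_comm] at hT'
  rw [surplus, hN]
  omega

variable [Fintype V]

lemma surplus_compl {I : Finset V} (hI : M.IsIndepSet I) (hM : ∀ v, ∃ w, M.Adj v w) :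
    M.surplus I Iᶜ = #I - #Iᶜ := by
  have hN : M.neighborsIn I Iᶜ = I := by
    refine filter_true_of_mem fun u huI => ?_
    obtain ⟨x, hux⟩ := hM u
    exact ⟨x, mem_compl.2 fun hxI => hI huI hxI (M.ne_of_adj hux) hux, hux.symm⟩
  rw [surplus, hN]

lemma IsMaximumIndepSet.surplus_nonneg {I K : Finset V} (hI : M.IsMaximumIndepSet I)
    (hK : M.IsIndepSet K) (hKI : Disjoint K I) : 0 ≤ M.surplus I K := by
  have hNI : M.neighborsIn I K ⊆ I := filter_subset _ _
  have hindep : M.IsIndepSet (↑((I \ M.neighborsIn I K) ∪ K) : Set V) := by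
    intro x hx y hy hxy hadj
    simp only [coe_union, coe_sdiff, Set.mem_union, Set.mem_sdiff, mem_coe] at hx hy
    rcases hx with ⟨hxI, hxN⟩ | hxK <;> rcases hy with ⟨hyI, hyN⟩ | hyK
    · exact hI.isIndepSet hxI hyI hxy hadj
    · exact hxN (mem_filter.2 ⟨hxI, y, hyK, hadj.symm⟩)
    · exact hyN (mem_filter.2 ⟨hyI, x, hxK, hadj⟩)
    · exact hK hxK hyK hxy hadj
  have hcard := hI.maximum _ hindep
  rw [card_union_of_disjoint (hKI.symm.mono_left sdiff_subset), card_sdiff_of_subset hNI] at hcard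
  have := card_le_card hNI
  unfold surplus
  omega

lemma IsMaximumIndepSet.card_sub_card_compl_le_sum {I : Finset V} (hI : M.IsMaximumIndepSet I)
    (hM : ∀ v, ∃ w, M.Adj v w) {T : V → Finset V}
    (hT : ∀ w, Maximal (fun s : Finset V => M.IsIndepSet s) (T w)) (hwT : ∀ w, w ∈ T w) :
    (#I : ℤ) - #Iᶜ ≤ ∑ w ∈ Iᶜ, ((#I : ℤ) - #(T w)) := by
  have hcover : Iᶜ.biUnion (fun w => T w \ I) = Iᶜ := by
    ext u
    simp only [mem_biUnion, mem_sdiff, mem_compl]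
    exact ⟨fun ⟨_, _, _, hu⟩ => hu, fun hu => ⟨u, hu, hwT u, hu⟩⟩
  calc (#I : ℤ) - #Iᶜ = M.surplus I Iᶜ := (surplus_compl hI.isIndepSet hM).symm
    _ = M.surplus I (Iᶜ.biUnion fun w => T w \ I) := by rw [hcover]
    _ ≤ ∑ w ∈ Iᶜ, M.surplus I (T w \ I) :=
      surplus_biUnion_le _ _ fun w _ B hB => hI.surplus_nonneg
        ((hT w).prop.mono (coe_subset.2 (hB.trans sdiff_subset))) (sdiff_disjoint.mono_left hB)
    _ = _ := sum_congr rfl fun w _ => surplus_sdiff_of_maximal hI.isIndepSet (hT w)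

theorem card_le_of_forall_mem_large_indepSet (c : ℕ) (hM : ∀ v, ∃ w, M.Adj v w)
    (hJ : ∀ v, ∃ J : Finset V, M.IsIndepSet J ∧ v ∈ J ∧ Fintype.card V ≤ #J + c) :
    Fintype.card V ≤ (c + 2) ^ 2 / 4 := by
  obtain ⟨I, hI⟩ := M.maximumIndepSet_exists
  have hT : ∀ w, ∃ T : Finset V, Maximal (fun s : Finset V => M.IsIndepSet s) T ∧ w ∈ T ∧
      Fintype.card V ≤ #T + c := by
    intro w
    obtain ⟨J, hJ, hwJ, hJc⟩ := hJ w
    obtain ⟨T, hJT, hT⟩ :=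
      exists_maximal_ge_of_wellFoundedGT (fun s : Finset V => M.IsIndepSet s) J hJ
    exact ⟨T, hT, hJT hwJ, hJc.trans (by grw [card_le_card hJT])⟩
  choose T hTmax hwT hTc using hT
  have key := hI.card_sub_card_compl_le_sum hM hTmax hwT
  have hn : Fintype.card V = #I + #Iᶜ := (card_add_card_compl I).symm
  rcases Iᶜ.eq_empty_or_nonempty with hempty | hne
  · simp only [hempty, card_empty, sum_empty] at key hn
    omega
  obtain ⟨w, -, hw⟩ := exists_max_image Iᶜ (fun w => (#I : ℤ) - #(T w)) hne
  have hkey := key.trans (sum_le_card_nsmul _ _ _ hw)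
  have hTI : #(T w) ≤ #I := hI.maximum _ (hTmax w).prop
  refine Nat.le_sq_div_four_of_le_mul (x := #Iᶜ) (y := #I - #(T w) + 2) ?_ ?_
  · rw [nsmul_eq_mul] at hkey
    zify [hTI] at hkey ⊢
    nlinarith
  · have := hTc w
    omega

end SimpleGraph

namespace GraphClass

variable (𝒢 : GraphClass) {V : Type} [Finite V] (G : SimpleGraph V)

def MemInduce (s : Set V) : Prop := 𝒢.Mem s (G.induce s)

def pairGraph : SimpleGraph V where
  Adj x y := x ≠ y ∧ 𝒢.MemInduce G {x, y}ᶜ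
  symm := ⟨fun _ _ h => ⟨h.1.symm, by rw [Set.pair_comm]; exact h.2⟩⟩
  loopless := ⟨fun _ h => h.1 rfl⟩

variable {𝒢 G}

theorem mem_iff_memInduce_range {W : Type} [Finite W] {H : SimpleGraph W} (f : H ↪g G) :
    𝒢.Mem W H ↔ 𝒢.MemInduce G (Set.range f) :=
  ⟨𝒢.iso_closed _ _ _ _ ⟨f.isoInduceRange⟩, 𝒢.iso_closed _ _ _ _ ⟨f.isoInduceRange.symm⟩⟩

theorem mem_induce_induce_iff {A : Set V} (t : Set A) :
    𝒢.Mem t ((G.induce A).induce t) ↔ 𝒢.MemInduce G (Subtype.val '' t) := by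
  let f : (G.induce A).induce t ↪g G := (Embedding.induce A).comp (Embedding.induce t)
  have hrange : Set.range f = Subtype.val '' t := by
    ext x
    constructor
    · rintro ⟨⟨y, hy⟩, rfl⟩
      exact ⟨y, hy, rfl⟩
    · rintro ⟨y, hy, rfl⟩
      exact ⟨⟨y, hy⟩, rfl⟩
  rw [mem_iff_memInduce_range f, hrange]

theorem MemInduce.mono (hher : Hereditary 𝒢.Mem) {s t : Set V} (hst : s ⊆ t)
    (h : 𝒢.MemInduce G t) : 𝒢.MemInduce G s := by
  have hs := hher t (G.induce t) (Subtype.val ⁻¹' s) h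
  rw [mem_induce_induce_iff, Subtype.image_preimage_coe, Set.inter_eq_right.2 hst] at hs
  exact hs

theorem exists_subset_not_memInduce_ncard_le {c : ℕ}
    (hc : ∀ (W : Type) [Finite W] (H : SimpleGraph W), Forb 𝒢.Mem H → Nat.card W ≤ c)
    {s : Set V} (hs : ¬ 𝒢.MemInduce G s) : ∃ m ⊆ s, ¬ 𝒢.MemInduce G m ∧ m.ncard ≤ c := by
  obtain ⟨m, hms, hmin⟩ := exists_minimal_le_of_wellFoundedLT (¬ 𝒢.MemInduce G ·) s hs
  refine ⟨m, hms, hmin.prop, ?_⟩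
  have hforb : Forb 𝒢.Mem (G.induce m) := by
    refine ⟨hmin.prop, fun t ht => (mem_induce_induce_iff t).2 ?_⟩
    by_contra hbad
    have himage := hmin.eq_of_le hbad (Subtype.coe_image_subset m t)
    exact ht (Subtype.val_injective.image_injective (himage.trans (Subtype.coe_image_univ m).symm))
  exact hc m _ hforb

theorem exists_pairGraph_adj [Nontrivial V] (hG : Forb (ApexMem 𝒢) G) (v : V) :
    ∃ w, (𝒢.pairGraph G).Adj v w := by
  rcases hG.2 {v}ᶜ (by simp) with hempty | ⟨w, hw⟩
  · obtain ⟨u, hu⟩ := exists_ne v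
    exact hempty.elim' ⟨u, hu⟩
  have hpair : Subtype.val '' {u : ({v}ᶜ : Set V) | u ≠ w} = {v, ↑w}ᶜ := by
    ext x
    simp [Subtype.ext_iff, and_comm]
  exact ⟨w, Ne.symm w.2, hpair ▸ (mem_induce_induce_iff _).1 hw⟩

theorem isIndepSet_pairGraph_compl (hher : Hereditary 𝒢.Mem) {m : Set V}
    (hm : ¬ 𝒢.MemInduce G m) : (𝒢.pairGraph G).IsIndepSet mᶜ := by
  rintro x hx y hy - ⟨-, hxy⟩
  refine hm (hxy.mono hher fun u hu => ?_)
  rintro (rfl | rfl)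
  exacts [hx hu, hy hu]

theorem exists_mem_isIndepSet_pairGraph (hher : Hereditary 𝒢.Mem) {c : ℕ}
    (hc : ∀ (W : Type) [Finite W] (H : SimpleGraph W), Forb 𝒢.Mem H → Nat.card W ≤ c)
    (hG : Forb (ApexMem 𝒢) G) (v : V) :
    ∃ J : Set V, (𝒢.pairGraph G).IsIndepSet J ∧ v ∈ J ∧ Nat.card V ≤ J.ncard + c := by
  obtain ⟨m, hmv, hm, hmc⟩ :=
    exists_subset_not_memInduce_ncard_le hc (s := {v}ᶜ) fun h => hG.1 (Or.inr ⟨v, h⟩)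
  refine ⟨mᶜ, isIndepSet_pairGraph_compl hher hm, fun hvm => hmv hvm rfl, ?_⟩
  rw [← Set.ncard_add_ncard_compl m]
  omega

end GraphClass

/-- If every forbidden induced subgraph for a hereditary class 𝒢 has at most c vertices,
then every forbidden induced subgraph for the apex class 𝒢^apex has at most
⌊(c+2)²/4⌋ vertices. -/
theorem apex_forbidden_bound (𝒢 : GraphClass) (hher : Hereditary 𝒢.Mem) (c : ℕ)
    (hc : ∀ (V : Type) [Finite V] (H : SimpleGraph V), Forb 𝒢.Mem H → Nat.card V ≤ c)
    (V : Type) [Finite V] (G : SimpleGraph V) (hG : Forb (ApexMem 𝒢) G) :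
    Nat.card V ≤ (c + 2) ^ 2 / 4 := by
  classical
  have := Fintype.ofFinite V
  rcases subsingleton_or_nontrivial V with hV | hV
  · exact Nat.le_sq_div_four_of_le_mul (x := 1) (y := 1)
      (by simpa using Finite.card_le_one_iff_subsingleton.2 hV) (by omega)
  rw [Nat.card_eq_fintype_card]
  refine (𝒢.pairGraph G).card_le_of_forall_mem_large_indepSet c (𝒢.exists_pairGraph_adj hG)
    fun v => ?_
  obtain ⟨J, hJ, hvJ, hJc⟩ := 𝒢.exists_mem_isIndepSet_pairGraph hher hc hG v
  exact ⟨J.toFinset, by simpa using hJ, by simpa using hvJ,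
    by simpa [Set.ncard_eq_toFinset_card'] using hJc⟩
end

section
/- Every forbidden induced subgraph for the class of apex cographs has at most 9 vertices. -/
open SimpleGraph

/-- A cograph is a graph with no induced path on 4 vertices. -/
def IsCograph {V : Type} (G : SimpleGraph V) : Prop :=
  IsEmpty (SimpleGraph.pathGraph 4 ↪g G)

/-- An apex cograph is a graph having a vertex whose deletion yields a cograph
(together with the empty graph). -/
def IsApexCograph {V : Type} (G : SimpleGraph V) : Prop :=
  IsEmpty V ∨ ∃ v : V, IsCograph (G.induce {u : V | u ≠ v})

/-- A forbidden induced subgraph for the class of apex cographs: a graph that is not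
an apex cograph, all of whose proper induced subgraphs are apex cographs. -/
def ForbApexCograph {V : Type} (G : SimpleGraph V) : Prop :=
  ¬ IsApexCograph G ∧ ∀ s : Set V, s ≠ Set.univ → IsApexCograph (G.induce s)

/-- Key combinatorial lemma: if `F` is a family of 4-element finsets such that every
vertex is avoided by some member, then there is a set `S` of at most 9 vertices
containing a member of `F` such that every element of `S` is avoided by a member of `F`
contained in `S`. -/
lemma aux_nine {V : Type} [DecidableEq V] (F : Set (Finset V))
    (h4 : ∀ A ∈ F, A.card = 4) (hne : ∃ A, A ∈ F)
    (hi : ∀ u : V, ∃ A ∈ F, u ∉ A) :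
    ∃ S : Finset V, S.card ≤ 9 ∧ (∃ A ∈ F, A ⊆ S) ∧
      ∀ u ∈ S, ∃ A ∈ F, A ⊆ S ∧ u ∉ A := by
  classical
  obtain ⟨A₀, hA₀⟩ := hne
  set T : Set ℕ := {n | ∃ A ∈ F, ∃ B ∈ F, (A ∩ B).card = n} with hT
  have hTne : T.Nonempty := ⟨(A₀ ∩ A₀).card, A₀, hA₀, A₀, hA₀, rfl⟩
  obtain ⟨A, hA, B, hB, hABcard⟩ := Nat.sInf_mem hTne
  have hmin : ∀ C ∈ F, ∀ D ∈ F, sInf T ≤ (C ∩ D).card := by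
    intro C hC D hD
    exact Nat.sInf_le ⟨C, hC, D, hD, rfl⟩
  set n := sInf T with hn
  have hA4 := h4 A hA
  have hB4 := h4 B hB
  have hn4 : n ≤ 4 := by
    rw [← hABcard]
    exact le_trans (Finset.card_le_card (Finset.inter_subset_left)) (le_of_eq hA4)
  have hcases : n = 0 ∨ n = 1 ∨ n = 2 ∨ n = 3 ∨ n = 4 := by omega
  rcases hcases with h0 | h1 | h2 | h3 | hh4
  · -- A and B are disjoint
    refine ⟨A ∪ B, ?_, ⟨A, hA, Finset.subset_union_left⟩, ?_⟩
    · calc (A ∪ B).card ≤ A.card + B.card := Finset.card_union_le A B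
        _ ≤ 9 := by omega
    · intro u hu
      have hABempty : A ∩ B = ∅ := Finset.card_eq_zero.mp (by omega)
      by_cases huA : u ∈ A
      · refine ⟨B, hB, Finset.subset_union_right, ?_⟩
        intro huB
        have : u ∈ A ∩ B := Finset.mem_inter.mpr ⟨huA, huB⟩
        simp [hABempty] at this
      · exact ⟨A, hA, Finset.subset_union_left, huA⟩
  · -- |A ∩ B| = 1
    obtain ⟨w, hw⟩ := Finset.card_eq_one.mp (by omega : (A ∩ B).card = 1)
    obtain ⟨C, hC, hwC⟩ := hi w
    have hC4 := h4 C hC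
    -- C meets both A and B in distinct points
    have hCA : 1 ≤ (C ∩ A).card := by
      have := hmin C hC A hA; omega
    have hCB : 1 ≤ (C ∩ B).card := by
      have := hmin C hC B hB; omega
    obtain ⟨a, ha⟩ := Finset.card_pos.mp (by omega : 0 < (C ∩ A).card)
    obtain ⟨b, hb⟩ := Finset.card_pos.mp (by omega : 0 < (C ∩ B).card)
    rw [Finset.mem_inter] at ha hb
    have hab : a ≠ b := by
      intro h
      have : a ∈ A ∩ B := Finset.mem_inter.mpr ⟨ha.2, h ▸ hb.2⟩
      rw [hw, Finset.mem_singleton] at this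
      exact hwC (this ▸ ha.1)
    have hABu : (A ∪ B).card = 7 := by
      have := Finset.card_union_add_card_inter A B; omega
    have hsub : ({a, b} : Finset V) ⊆ (A ∪ B) ∩ C := by
      intro x hx
      rcases Finset.mem_insert.mp hx with rfl | hx
      · exact Finset.mem_inter.mpr ⟨Finset.mem_union_left _ ha.2, ha.1⟩
      · rw [Finset.mem_singleton] at hx
        subst hx
        exact Finset.mem_inter.mpr ⟨Finset.mem_union_right _ hb.2, hb.1⟩
    have h2le : 2 ≤ ((A ∪ B) ∩ C).card := by
      calc 2 = ({a, b} : Finset V).card := (Finset.card_pair hab).symm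
        _ ≤ _ := Finset.card_le_card hsub
    refine ⟨A ∪ B ∪ C, ?_, ⟨A, hA, by intro x hx; simp [hx]⟩, ?_⟩
    · have := Finset.card_union_add_card_inter (A ∪ B) C
      omega
    · intro u hu
      by_cases huA : u ∈ A
      · by_cases huB : u ∈ B
        · have : u ∈ A ∩ B := Finset.mem_inter.mpr ⟨huA, huB⟩
          rw [hw, Finset.mem_singleton] at this
          subst this
          exact ⟨C, hC, by intro x hx; simp [hx], hwC⟩
        · exact ⟨B, hB, by intro x hx; simp [hx], huB⟩
      · exact ⟨A, hA, by intro x hx; simp [hx], huA⟩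
  · -- |A ∩ B| = 2
    obtain ⟨w, w', hww', hw⟩ := Finset.card_eq_two.mp (by omega : (A ∩ B).card = 2)
    obtain ⟨C, hC, hwC⟩ := hi w
    obtain ⟨D, hD, hw'D⟩ := hi w'
    have hC4 := h4 C hC
    have hD4 := h4 D hD
    have hABu : (A ∪ B).card = 6 := by
      have := Finset.card_union_add_card_inter A B; omega
    -- For any E ∈ F avoiding one element of {w, w'}, |E ∩ (A ∪ B)| ≥ 3
    have hkey : ∀ E ∈ F, ∀ z : V, (A ∩ B = {w, w'}) → (z = w ∨ z = w') → z ∉ E →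
        3 ≤ (E ∩ (A ∪ B)).card := by
      intro E hE z hABeq hz hzE
      have hEA : 2 ≤ (E ∩ A).card := by have := hmin E hE A hA; omega
      have hEB : 2 ≤ (E ∩ B).card := by have := hmin E hE B hB; omega
      have hsmall : ((E ∩ A) ∩ (E ∩ B)).card ≤ 1 := by
        have hsub : (E ∩ A) ∩ (E ∩ B) ⊆ {w, w'} \ {z} := by
          intro x hx
          simp only [Finset.mem_inter] at hx
          have hxAB : x ∈ A ∩ B := Finset.mem_inter.mpr ⟨hx.1.2, hx.2.2⟩
          rw [hABeq] at hxAB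
          refine Finset.mem_sdiff.mpr ⟨hxAB, ?_⟩
          rw [Finset.mem_singleton]
          rintro rfl
          exact hzE hx.1.1
        obtain ⟨y, hy⟩ : ∃ y : V, (({w, w'} : Finset V) \ {z}) ⊆ {y} := by
          rcases hz with rfl | rfl
          · refine ⟨w', ?_⟩
            intro x hx
            simp only [Finset.mem_sdiff, Finset.mem_insert, Finset.mem_singleton] at hx ⊢
            tauto
          · refine ⟨w, ?_⟩
            intro x hx
            simp only [Finset.mem_sdiff, Finset.mem_insert, Finset.mem_singleton] at hx ⊢
            tauto
        calc ((E ∩ A) ∩ (E ∩ B)).card ≤ ({y} : Finset V).card :=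
              Finset.card_le_card (hsub.trans hy)
          _ = 1 := Finset.card_singleton y
      have hdistr : E ∩ (A ∪ B) = (E ∩ A) ∪ (E ∩ B) := Finset.inter_union_distrib_left E A B
      have := Finset.card_union_add_card_inter (E ∩ A) (E ∩ B)
      rw [hdistr]
      omega
    have hCcard : 3 ≤ (C ∩ (A ∪ B)).card := hkey C hC w hw (Or.inl rfl) hwC
    have hDcard : 3 ≤ (D ∩ (A ∪ B)).card := hkey D hD w' hw (Or.inr rfl) hw'D
    refine ⟨A ∪ B ∪ C ∪ D, ?_, ⟨A, hA, by intro x hx; simp [hx]⟩, ?_⟩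
    · have h1 : (A ∪ B ∪ C).card ≤ 7 := by
        have heq := Finset.card_union_add_card_inter (A ∪ B) C
        have : (C ∩ (A ∪ B)).card = ((A ∪ B) ∩ C).card := by rw [Finset.inter_comm]
        omega
      have h2 : 3 ≤ ((A ∪ B ∪ C) ∩ D).card := by
        calc 3 ≤ (D ∩ (A ∪ B)).card := hDcard
          _ = ((A ∪ B) ∩ D).card := by rw [Finset.inter_comm]
          _ ≤ ((A ∪ B ∪ C) ∩ D).card :=
              Finset.card_le_card (Finset.inter_subset_inter (Finset.subset_union_left) (le_refl D))
      have heq := Finset.card_union_add_card_inter (A ∪ B ∪ C) D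
      omega
    · intro u hu
      by_cases huA : u ∈ A
      · by_cases huB : u ∈ B
        · have huw : u ∈ ({w, w'} : Finset V) := hw ▸ Finset.mem_inter.mpr ⟨huA, huB⟩
          rcases Finset.mem_insert.mp huw with rfl | huw'
          · exact ⟨C, hC, by intro x hx; simp [hx], hwC⟩
          · rw [Finset.mem_singleton] at huw'
            subst huw'
            exact ⟨D, hD, by intro x hx; simp [hx], hw'D⟩
        · exact ⟨B, hB, by intro x hx; simp [hx], huB⟩
      · exact ⟨A, hA, by intro x hx; simp [hx], huA⟩
  · -- |A ∩ B| = 3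
    obtain ⟨w₁, w₂, w₃, h12, h13, h23, hw⟩ :=
      Finset.card_eq_three.mp (by omega : (A ∩ B).card = 3)
    obtain ⟨C₁, hC1, hw1⟩ := hi w₁
    obtain ⟨C₂, hC2, hw2⟩ := hi w₂
    obtain ⟨C₃, hC3, hw3⟩ := hi w₃
    have hABu : (A ∪ B).card = 5 := by
      have := Finset.card_union_add_card_inter A B; omega
    have hkey : ∀ E ∈ F, ∀ X : Finset V, X.card ≤ 9 → A ∪ B ⊆ X →
        (X ∪ E).card ≤ X.card + 1 := by
      intro E hE X _ hX
      have hEA : 3 ≤ (E ∩ A).card := by have := hmin E hE A hA; omega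
      have hXE : 3 ≤ (X ∩ E).card := by
        calc 3 ≤ (E ∩ A).card := hEA
          _ = (A ∩ E).card := by rw [Finset.inter_comm]
          _ ≤ (X ∩ E).card := Finset.card_le_card
              (Finset.inter_subset_inter
                ((Finset.subset_union_left).trans hX) (le_refl E))
      have := Finset.card_union_add_card_inter X E
      have hE4 := h4 E hE
      omega
    refine ⟨A ∪ B ∪ C₁ ∪ C₂ ∪ C₃, ?_, ⟨A, hA, by intro x hx; simp [hx]⟩, ?_⟩
    · have hsub1 : A ∪ B ⊆ A ∪ B := le_refl _
      have s1 : (A ∪ B ∪ C₁).card ≤ 6 := by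
        have := hkey C₁ hC1 (A ∪ B) (by omega) hsub1; omega
      have s2 : (A ∪ B ∪ C₁ ∪ C₂).card ≤ 7 := by
        have := hkey C₂ hC2 (A ∪ B ∪ C₁)
          (by omega) (by intro x hx; simp only [Finset.mem_union] at hx ⊢; tauto)
        omega
      have s3 : (A ∪ B ∪ C₁ ∪ C₂ ∪ C₃).card ≤ 8 := by
        have := hkey C₃ hC3 (A ∪ B ∪ C₁ ∪ C₂)
          (by omega) (by intro x hx; simp only [Finset.mem_union] at hx ⊢; tauto)
        omega
      omega
    · intro u hu
      by_cases huA : u ∈ A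
      · by_cases huB : u ∈ B
        · have huw : u ∈ ({w₁, w₂, w₃} : Finset V) := hw ▸ Finset.mem_inter.mpr ⟨huA, huB⟩
          simp only [Finset.mem_insert, Finset.mem_singleton] at huw
          rcases huw with rfl | rfl | rfl
          · exact ⟨C₁, hC1, by intro x hx; simp [hx], hw1⟩
          · exact ⟨C₂, hC2, by intro x hx; simp [hx], hw2⟩
          · exact ⟨C₃, hC3, by intro x hx; simp [hx], hw3⟩
        · exact ⟨B, hB, by intro x hx; simp [hx], huB⟩
      · exact ⟨A, hA, by intro x hx; simp [hx], huA⟩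
  · -- |A ∩ B| = 4: impossible
    exfalso
    obtain ⟨w, hwAB⟩ := Finset.card_pos.mp (by omega : 0 < (A ∩ B).card)
    obtain ⟨C, hC, hwC⟩ := hi w
    have hC4 := h4 C hC
    have hCA : 4 ≤ (C ∩ A).card := by have := hmin C hC A hA; omega
    have hCAle : (C ∩ A).card ≤ C.card := Finset.card_le_card Finset.inter_subset_left
    have hCeq : C ∩ A = C :=
      Finset.eq_of_subset_of_card_le Finset.inter_subset_left (by omega)
    have hCsubA : C ⊆ A := by rw [← hCeq]; exact Finset.inter_subset_right
    have : C = A := Finset.eq_of_subset_of_card_le hCsubA (by omega)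
    exact hwC (this ▸ (Finset.mem_inter.mp hwAB).1)

/-- Every forbidden induced subgraph for the class of apex cographs has at most 9 vertices. -/
theorem forb_apex_cograph_card_le_nine (V : Type) [Finite V] (G : SimpleGraph V)
    (hG : ForbApexCograph G) : Nat.card V ≤ 9 := by
  classical
  have : Fintype V := Fintype.ofFinite V
  obtain ⟨hNotApex, hMinimal⟩ := hG
  rcases isEmpty_or_nonempty V with hV | hV
  · exact absurd (Or.inl hV) hNotApex
  -- For every vertex u there is an induced P4 avoiding u.
  have key : ∀ u : V, ∃ f : SimpleGraph.pathGraph 4 ↪g G, ∀ i, f i ≠ u := by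
    intro u
    have hnc : ¬ IsCograph (G.induce {w : V | w ≠ u}) :=
      fun hc => hNotApex (Or.inr ⟨u, hc⟩)
    rw [IsCograph, not_isEmpty_iff] at hnc
    obtain ⟨e⟩ := hnc
    exact ⟨(SimpleGraph.Embedding.induce _).comp e, fun i => (e i).2⟩
  -- The family of vertex sets of induced P4's.
  set F : Set (Finset V) :=
    {A | ∃ f : SimpleGraph.pathGraph 4 ↪g G, A = Finset.image f Finset.univ} with hF
  have h4 : ∀ A ∈ F, A.card = 4 := by
    rintro A ⟨f, rfl⟩
    rw [Finset.card_image_of_injective _ f.injective]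
    simp
  have hi : ∀ u : V, ∃ A ∈ F, u ∉ A := by
    intro u
    obtain ⟨f, hf⟩ := key u
    refine ⟨Finset.image f Finset.univ, ⟨f, rfl⟩, ?_⟩
    simp only [Finset.mem_image, Finset.mem_univ, true_and]
    rintro ⟨i, hiu⟩
    exact hf i hiu
  have hne : ∃ A, A ∈ F := by
    obtain ⟨A, hA, _⟩ := hi (Classical.arbitrary V)
    exact ⟨A, hA⟩
  obtain ⟨S, hScard, ⟨A, hAF, hAS⟩, hcover⟩ := aux_nine F h4 hne hi
  by_cases hSuniv : (↑S : Set V) = Set.univ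
  · have : S = Finset.univ := Finset.coe_injective (by simp [hSuniv])
    rw [Nat.card_eq_fintype_card, ← Finset.card_univ, ← this]
    exact hScard
  · exfalso
    have hapex := hMinimal (↑S) hSuniv
    rcases hapex with hEmpty | ⟨v, hCog⟩
    · obtain ⟨a, haA⟩ := Finset.card_pos.mp (by rw [h4 A hAF]; omega : 0 < A.card)
      exact hEmpty.elim ⟨a, hAS haA⟩
    · -- v : ↥(↑S); find a P4 inside S avoiding v
      obtain ⟨B, hBF, hBS, hvB⟩ := hcover (v : V) v.2
      obtain ⟨f, rfl⟩ := hBF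
      have hmem : ∀ i, f i ∈ Finset.image f Finset.univ := by
        intro i; exact Finset.mem_image_of_mem f (Finset.mem_univ i)
      have hfS : ∀ i : Fin 4, f i ∈ (↑S : Set V) := fun i => hBS (hmem i)
      have hfv : ∀ i : Fin 4, (⟨f i, hfS i⟩ : ↥(↑S : Set V)) ≠ v := by
        intro i h
        apply hvB
        have : f i = (v : V) := congrArg Subtype.val h
        exact this ▸ hmem i
      have e : SimpleGraph.pathGraph 4 ↪g
          ((G.induce (↑S : Set V)).induce {u : ↥(↑S : Set V) | u ≠ v}) :=
        { toFun := fun i => ⟨⟨f i, hfS i⟩, hfv i⟩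
          inj' := by
            intro a b h
            apply f.injective
            have h1 : (⟨f a, hfS a⟩ : ↥(↑S : Set V)) = ⟨f b, hfS b⟩ := congrArg Subtype.val h
            exact congrArg Subtype.val h1
          map_rel_iff' := by
            intro a b
            simp only [SimpleGraph.comap_adj, Function.Embedding.coeFn_mk]
            exact f.map_rel_iff }
      exact hCog.false e
end

section
/- Let G be a forbidden induced subgraph for the class of apex cographs with exactly 9 vertices. Then V(G) has three distinct 4-element subsets S, T, F such that each of G[S], G[T], G[F] induces a path P₄, and |S ∩ T| = |T ∩ F| = |S ∩ F| = 1. -/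
open SimpleGraph

/-- S is a 4-set inducing a P4. -/
def P4s {V : Type} (G : SimpleGraph V) (S : Finset V) : Prop :=
  S.card = 4 ∧ Nonempty (G.induce (S : Set V) ≃g SimpleGraph.pathGraph 4)

lemma exists_p4s_of_emb {V : Type} [DecidableEq V] (G : SimpleGraph V) {s : Set V}
    (f : SimpleGraph.pathGraph 4 ↪g G.induce s) :
    ∃ S : Finset V, P4s G S ∧ ↑S ⊆ s := by
  classical
  obtain ⟨S, hS⟩ : ∃ S : Finset V, S = Finset.univ.image (fun i : Fin 4 => ((f i : s) : V)) :=
    ⟨_, rfl⟩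
  have hginj : Function.Injective (fun i : Fin 4 => ((f i : s) : V)) := by
    intro i j h
    exact f.injective (Subtype.ext h)
  have hcard : S.card = 4 := by
    rw [hS, Finset.card_image_of_injective _ hginj, Finset.card_univ, Fintype.card_fin]
  have hmem : ∀ i : Fin 4, ((f i : s) : V) ∈ (S : Set V) := by
    intro i
    rw [hS]
    exact Finset.mem_coe.mpr (Finset.mem_image_of_mem _ (Finset.mem_univ i))
  have hsurj : ∀ x : V, x ∈ (S : Set V) → ∃ i : Fin 4, ((f i : s) : V) = x := by
    intro x hx
    rw [hS] at hx
    obtain ⟨i, _, hi⟩ := Finset.mem_image.mp (Finset.mem_coe.mp hx)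
    exact ⟨i, hi⟩
  have hsub : (S : Set V) ⊆ s := by
    intro x hx
    obtain ⟨i, hi⟩ := hsurj x hx
    rw [← hi]
    exact (f i).2
  have hbij : Function.Bijective (fun i : Fin 4 => (⟨(f i : s), hmem i⟩ : (S : Set V))) := by
    constructor
    · intro i j h
      have h' : (⟨((f i : s) : V), hmem i⟩ : (S : Set V)) = ⟨((f j : s) : V), hmem j⟩ := h
      have h'' := congrArg Subtype.val h'
      exact hginj h''
    · rintro ⟨x, hx⟩
      obtain ⟨i, hi⟩ := hsurj x hx
      exact ⟨i, Subtype.ext hi⟩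
  refine ⟨S, ⟨hcard, ?_⟩, hsub⟩
  set e : Fin 4 ≃ (S : Set V) := Equiv.ofBijective _ hbij with he
  have iso : SimpleGraph.pathGraph 4 ≃g G.induce (S : Set V) := by
    refine ⟨e, ?_⟩
    intro i j
    have h2 : (G.induce (S : Set V)).Adj (e i) (e j) ↔ (G.induce s).Adj (f i) (f j) := Iff.rfl
    rw [h2]
    exact f.map_adj_iff
  exact ⟨iso.symm⟩

noncomputable def emb_of_p4s {V : Type} (G : SimpleGraph V) {S : Finset V}
    (h : Nonempty (G.induce (S : Set V) ≃g SimpleGraph.pathGraph 4))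
    {s : Set V} {t : Set s} (hs : (S : Set V) ⊆ s)
    (ht : ∀ x (hx : x ∈ S), (⟨x, hs hx⟩ : s) ∈ t) :
    SimpleGraph.pathGraph 4 ↪g (G.induce s).induce t := by
  have e : G.induce (S : Set V) ↪g (G.induce s).induce t := by
    refine ⟨⟨fun x => ⟨⟨x.1, hs x.2⟩, ht x.1 x.2⟩, ?_⟩, ?_⟩
    · intro x y hxy
      exact Subtype.ext (congrArg (Subtype.val ∘ Subtype.val) hxy)
    · intro x y
      exact Iff.rfl
  exact e.comp h.some.symm.toEmbedding


section Combo
variable {V : Type} [Fintype V] [DecidableEq V]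

lemma exists_outside (s : Finset V) (h : s.card < Fintype.card V) : ∃ z, z ∉ s := by
  have h0 : 0 < sᶜ.card := by
    rw [Finset.card_compl]
    omega
  obtain ⟨z, hz⟩ := Finset.card_pos.mp h0
  exact ⟨z, Finset.mem_compl.mp hz⟩

/-- Any two members of the family intersect. -/
lemma inter_nonempty (H : Finset V → Prop) (h9 : Fintype.card V = 9)
    (hc : ∀ S, H S → S.card = 4)
    (H2 : ∀ v : V, ∃ w : V, ∀ S, H S → v ∈ S ∨ w ∈ S) :
    ∀ A B, H A → H B → (A ∩ B).Nonempty := by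
  intro A B hA hB
  by_contra hcon
  rw [Finset.not_nonempty_iff_eq_empty] at hcon
  obtain ⟨z, hz⟩ := exists_outside (A ∪ B) (by
    have h1 := Finset.card_union_le A B
    rw [hc A hA, hc B hB] at h1
    omega)
  obtain ⟨w, hw⟩ := H2 z
  have hzA : z ∉ A := fun h => hz (Finset.mem_union_left _ h)
  have hzB : z ∉ B := fun h => hz (Finset.mem_union_right _ h)
  have hwA : w ∈ A := (hw A hA).resolve_left hzA
  have hwB : w ∈ B := (hw B hB).resolve_left hzB
  have : w ∈ A ∩ B := Finset.mem_inter.mpr ⟨hwA, hwB⟩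
  rw [hcon] at this
  exact absurd this (Finset.notMem_empty w)

/-- There exist two members meeting in exactly one vertex. -/
lemma claimA (H : Finset V → Prop) (h9 : Fintype.card V = 9)
    (hc : ∀ S, H S → S.card = 4)
    (H1 : ∀ v : V, ∃ S, H S ∧ v ∉ S)
    (H2 : ∀ v : V, ∃ w : V, ∀ S, H S → v ∈ S ∨ w ∈ S) :
    ∃ A B, H A ∧ H B ∧ (A ∩ B).card = 1 := by
  classical
  have hint := inter_nonempty H h9 hc H2
  by_contra hcon
  push_neg at hcon
  -- every two members meet in at least 2 vertices
  have all2 : ∀ A B, H A → H B → 2 ≤ (A ∩ B).card := by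
    intro A B hA hB
    have h1 : 0 < (A ∩ B).card := Finset.card_pos.mpr (hint A B hA hB)
    have h2 := hcon A B hA hB
    omega
  choose w hw using H2
  by_cases hex : ∃ A B, H A ∧ H B ∧ (A ∩ B).card = 2
  · -- a pair meeting in exactly two vertices
    obtain ⟨S, T, hS, hT, hST⟩ := hex
    have hSc := hc S hS
    have hTc := hc T hT
    have hUcard : (S ∪ T).card = 6 := by
      have := Finset.card_union_add_card_inter S T
      omega
    -- Z = complement of S ∪ T has 3 elements
    have hZcard : (Finset.univ \ (S ∪ T)).card = 3 := by
      rw [Finset.card_sdiff_of_subset (Finset.subset_univ _), Finset.card_univ, h9, hUcard]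
    -- each z in Z has w z ∈ S ∩ T
    have hmaps : ∀ z ∈ Finset.univ \ (S ∪ T), w z ∈ S ∩ T := by
      intro z hz
      rw [Finset.mem_sdiff, Finset.mem_union] at hz
      push_neg at hz
      exact Finset.mem_inter.mpr
        ⟨(hw z S hS).resolve_left hz.2.1, (hw z T hT).resolve_left hz.2.2⟩
    obtain ⟨z1, hz1, z2, hz2, hne, heq⟩ :=
      Finset.exists_ne_map_eq_of_card_lt_of_maps_to (by rw [hST, hZcard]; omega) hmaps
    set p := w z1 with hp
    have hpST : p ∈ S ∩ T := hmaps z1 hz1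
    obtain ⟨F, hF, hpF⟩ := H1 p
    have hz1F : z1 ∈ F := (hw z1 F hF).resolve_right hpF
    have hz2F : z2 ∈ F := by
      have := hw z2 F hF
      rw [← heq] at this
      exact this.resolve_right hpF
    -- R = F minus {z1, z2}
    have hz1S : z1 ∉ S ∧ z1 ∉ T := by
      rw [Finset.mem_sdiff, Finset.mem_union] at hz1; tauto
    have hz2S : z2 ∉ S ∧ z2 ∉ T := by
      rw [Finset.mem_sdiff, Finset.mem_union] at hz2; tauto
    have hpair : ({z1, z2} : Finset V) ⊆ F := by
      intro x hx
      rw [Finset.mem_insert, Finset.mem_singleton] at hx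
      rcases hx with rfl | rfl <;> assumption
    have hRcard : (F \ {z1, z2}).card = 2 := by
      rw [Finset.card_sdiff_of_subset hpair, hc F hF, Finset.card_pair hne]
    have hFS : F ∩ S ⊆ F \ {z1, z2} := by
      intro x hx
      rw [Finset.mem_inter] at hx
      rw [Finset.mem_sdiff, Finset.mem_insert, Finset.mem_singleton]
      refine ⟨hx.1, ?_⟩
      rintro (rfl | rfl)
      exacts [hz1S.1 hx.2, hz2S.1 hx.2]
    have hFT : F ∩ T ⊆ F \ {z1, z2} := by
      intro x hx
      rw [Finset.mem_inter] at hx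
      rw [Finset.mem_sdiff, Finset.mem_insert, Finset.mem_singleton]
      refine ⟨hx.1, ?_⟩
      rintro (rfl | rfl)
      exacts [hz1S.2 hx.2, hz2S.2 hx.2]
    have hFSeq : F ∩ S = F \ {z1, z2} :=
      Finset.eq_of_subset_of_card_le hFS (by rw [hRcard]; exact all2 F S hF hS)
    have hFTeq : F ∩ T = F \ {z1, z2} :=
      Finset.eq_of_subset_of_card_le hFT (by rw [hRcard]; exact all2 F T hF hT)
    have hRS : F \ {z1, z2} ⊆ S := hFSeq ▸ Finset.inter_subset_right
    have hRT : F \ {z1, z2} ⊆ T := hFTeq ▸ Finset.inter_subset_right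
    have hRsub : F \ {z1, z2} ⊆ (S ∩ T).erase p := by
      intro x hx
      rw [Finset.mem_erase]
      refine ⟨?_, Finset.mem_inter.mpr ⟨hRS hx, hRT hx⟩⟩
      rintro rfl
      exact hpF (Finset.mem_sdiff.mp hx).1
    have := Finset.card_le_card hRsub
    rw [hRcard, Finset.card_erase_of_mem hpST, hST] at this
    omega
  · -- every two distinct members meet in exactly three vertices
    push_neg at hex
    have all3 : ∀ A B, H A → H B → A ≠ B → (A ∩ B).card = 3 := by
      intro A B hA hB hAB
      have h2 := all2 A B hA hB
      have h4 : (A ∩ B).card ≤ 4 := by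
        have := Finset.card_le_card (Finset.inter_subset_left : A ∩ B ⊆ A)
        rw [hc A hA] at this; exact this
      have hne2 : (A ∩ B).card ≠ 2 := fun h => hex A B hA hB h
      have hne4 : (A ∩ B).card ≠ 4 := by
        intro h
        apply hAB
        have hAeq : A ∩ B = A := Finset.eq_of_subset_of_card_le
          Finset.inter_subset_left (by rw [h, hc A hA])
        have hsub : A ⊆ B := by rw [← hAeq]; exact Finset.inter_subset_right
        exact Finset.eq_of_subset_of_card_le hsub (by rw [hc A hA, hc B hB]) 
      omega
    -- get two distinct members A B
    have : Nonempty V := by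
      rw [← Fintype.card_pos_iff, h9]; omega
    obtain ⟨v0⟩ := this
    obtain ⟨A, hA, _⟩ := H1 v0
    obtain ⟨a, ha⟩ : A.Nonempty := Finset.card_pos.mp (by rw [hc A hA]; omega)
    obtain ⟨B, hB, haB⟩ := H1 a
    have hABne : A ≠ B := fun h => haB (h ▸ ha)
    have hK : (A ∩ B).card = 3 := all3 A B hA hB hABne
    have hW : (A ∪ B).card = 5 := by
      have := Finset.card_union_add_card_inter A B
      rw [hc A hA, hc B hB, hK] at this
      omega
    by_cases hC : ∃ C, H C ∧ ¬ C ⊆ A ∪ B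
    · obtain ⟨C, hC, hCW⟩ := hC
      obtain ⟨c, hcC, hcW⟩ := Finset.not_subset.mp hCW
      have hcA : c ∉ A := fun h => hcW (Finset.mem_union_left _ h)
      have hcB : c ∉ B := fun h => hcW (Finset.mem_union_right _ h)
      have hCA : C ≠ A := fun h => hcA (h ▸ hcC)
      have hCB : C ≠ B := fun h => hcB (h ▸ hcC)
      have hCe : (C.erase c).card = 3 := by
        rw [Finset.card_erase_of_mem hcC, hc C hC]
      have heqA : C ∩ A = C.erase c := by
        apply Finset.eq_of_subset_of_card_le
        · intro x hx
          rw [Finset.mem_inter] at hx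
          rw [Finset.mem_erase]
          exact ⟨fun h => hcA (h ▸ hx.2), hx.1⟩
        · rw [hCe, all3 C A hC hA hCA]
      have heqB : C ∩ B = C.erase c := by
        apply Finset.eq_of_subset_of_card_le
        · intro x hx
          rw [Finset.mem_inter] at hx
          rw [Finset.mem_erase]
          exact ⟨fun h => hcB (h ▸ hx.2), hx.1⟩
        · rw [hCe, all3 C B hC hB hCB]
      have heqK : C.erase c = A ∩ B := by
        apply Finset.eq_of_subset_of_card_le
        · intro x hx
          have hxA : x ∈ C ∩ A := heqA ▸ hx
          have hxB : x ∈ C ∩ B := heqB ▸ hx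
          exact Finset.mem_inter.mpr
            ⟨(Finset.mem_inter.mp hxA).2, (Finset.mem_inter.mp hxB).2⟩
        · rw [hCe, hK]
      -- every member contains K = A ∩ B
      have allK : ∀ D, H D → A ∩ B ⊆ D := by
        intro D hD
        by_cases hDC : D = C
        · subst hDC
          rw [← heqK]
          exact Finset.erase_subset c D
        by_cases hcD : c ∈ D
        · exfalso
          have hDA : D ≠ A := fun h => hcA (h ▸ hcD)
          have hDB : D ≠ B := fun h => hcB (h ▸ hcD)
          have hDC3 : (D ∩ C).card = 3 := all3 D C hD hC hDC
          have hDKeq : D ∩ (A ∩ B) = (D ∩ C).erase c := by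
            rw [← heqK]
            ext x
            simp only [Finset.mem_inter, Finset.mem_erase]
            tauto
          have hDK : (D ∩ (A ∩ B)).card = 2 := by
            rw [hDKeq, Finset.card_erase_of_mem (Finset.mem_inter.mpr ⟨hcD, hcC⟩), hDC3]
          -- find a' ∈ D ∩ (A \ (A∩B))
          have hAK : (A \ (A ∩ B)).card = 1 := by
            rw [Finset.card_sdiff_of_subset Finset.inter_subset_left, hc A hA, hK]
          have hBK : (B \ (A ∩ B)).card = 1 := by
            rw [Finset.card_sdiff_of_subset Finset.inter_subset_right, hc B hB, hK]
          have hsplitA : D ∩ A ⊆ (D ∩ (A ∩ B)) ∪ (D ∩ (A \ (A ∩ B))) := by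
            intro x hx
            rw [Finset.mem_inter] at hx
            rw [Finset.mem_union, Finset.mem_inter, Finset.mem_inter,
              Finset.mem_inter, Finset.mem_sdiff, Finset.mem_inter]
            tauto
          have hDAne : (D ∩ (A \ (A ∩ B))).Nonempty := by
            rw [Finset.nonempty_iff_ne_empty]
            intro hemp
            have h3 : (D ∩ A).card = 3 := all3 D A hD hA hDA
            have hle := Finset.card_le_card hsplitA
            rw [hemp, Finset.union_empty, h3, hDK] at hle
            omega
          have hsplitB : D ∩ B ⊆ (D ∩ (A ∩ B)) ∪ (D ∩ (B \ (A ∩ B))) := by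
            intro x hx
            rw [Finset.mem_inter] at hx
            rw [Finset.mem_union, Finset.mem_inter, Finset.mem_inter,
              Finset.mem_inter, Finset.mem_sdiff, Finset.mem_inter]
            tauto
          have hDBne : (D ∩ (B \ (A ∩ B))).Nonempty := by
            rw [Finset.nonempty_iff_ne_empty]
            intro hemp
            have h3 : (D ∩ B).card = 3 := all3 D B hD hB hDB
            have hle := Finset.card_le_card hsplitB
            rw [hemp, Finset.union_empty, h3, hDK] at hle
            omega
          obtain ⟨a', ha'⟩ := hDAne
          obtain ⟨b', hb'⟩ := hDBne
          rw [Finset.mem_inter, Finset.mem_sdiff, Finset.mem_inter] at ha' hb'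
          -- now D contains c, a', b' and the two elements of D ∩ (A ∩ B): five elements
          have hbig : insert c (insert a' (insert b' (D ∩ (A ∩ B)))) ⊆ D := by
            intro x hx
            rw [Finset.mem_insert, Finset.mem_insert, Finset.mem_insert] at hx
            rcases hx with rfl | rfl | rfl | hx
            · exact hcD
            · exact ha'.1
            · exact hb'.1
            · exact (Finset.mem_inter.mp hx).1
          have hcard5 : (insert c (insert a' (insert b' (D ∩ (A ∩ B))))).card = 5 := by
            have hb'K : b' ∉ D ∩ (A ∩ B) := by
              rw [Finset.mem_inter]
              intro h
              exact hb'.2.2 (Finset.mem_inter.mp h.2)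
            have ha'1 : a' ∉ insert b' (D ∩ (A ∩ B)) := by
              rw [Finset.mem_insert, Finset.mem_inter]
              rintro (rfl | h)
              · exact ha'.2.2 ⟨ha'.2.1, hb'.2.1⟩
              · exact ha'.2.2 (Finset.mem_inter.mp h.2)
            have hc1 : c ∉ insert a' (insert b' (D ∩ (A ∩ B))) := by
              rw [Finset.mem_insert, Finset.mem_insert, Finset.mem_inter]
              rintro (rfl | rfl | h)
              · exact hcA ha'.2.1
              · exact hcB hb'.2.1
              · exact hcA (Finset.mem_inter.mp h.2).1
            rw [Finset.card_insert_of_notMem hc1, Finset.card_insert_of_notMem ha'1,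
              Finset.card_insert_of_notMem hb'K, hDK]
          have := Finset.card_le_card hbig
          rw [hcard5, hc D hD] at this
          omega
        · -- c ∉ D
          have hDC3 : (D ∩ C).card = 3 := all3 D C hD hC hDC
          have hsub : D ∩ C ⊆ A ∩ B := by
            intro x hx
            rw [Finset.mem_inter] at hx
            rw [← heqK, Finset.mem_erase]
            exact ⟨fun h => hcD (h ▸ hx.1), hx.2⟩
          have heq : D ∩ C = A ∩ B :=
            Finset.eq_of_subset_of_card_le hsub (by rw [hDC3, hK])
          rw [← heq]
          exact Finset.inter_subset_left
      obtain ⟨k, hk⟩ : (A ∩ B).Nonempty := Finset.card_pos.mp (by rw [hK]; omega)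
      obtain ⟨F, hF, hkF⟩ := H1 k
      exact hkF (allK F hF hk)
    · -- every member is inside W = A ∪ B
      push_neg at hC
      obtain ⟨z, hz⟩ := exists_outside (A ∪ B) (by rw [hW, h9]; omega)
      obtain ⟨F, hF, hwF⟩ := H1 (w z)
      have hzF : z ∈ F := (hw z F hF).resolve_right hwF
      exact hz (hC F hF hzF)

/-- The main combinatorial lemma. -/
lemma combo (H : Finset V → Prop) (h9 : Fintype.card V = 9)
    (hc : ∀ S, H S → S.card = 4)
    (H1 : ∀ v : V, ∃ S, H S ∧ v ∉ S)
    (H2 : ∀ v : V, ∃ w : V, ∀ S, H S → v ∈ S ∨ w ∈ S) :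
    ∃ S T F, H S ∧ H T ∧ H F ∧ S ≠ T ∧ T ≠ F ∧ S ≠ F ∧
      (S ∩ T).card = 1 ∧ (T ∩ F).card = 1 ∧ (S ∩ F).card = 1 := by
  classical
  have hint := inter_nonempty H h9 hc H2
  obtain ⟨S, T, hS, hT, hST⟩ := claimA H h9 hc H1 H2
  obtain ⟨y, hy⟩ := Finset.card_eq_one.mp hST
  have hyS : y ∈ S := (Finset.mem_inter.mp (hy ▸ Finset.mem_singleton_self y)).1
  have hyT : y ∈ T := (Finset.mem_inter.mp (hy ▸ Finset.mem_singleton_self y)).2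
  have hSTne : S ≠ T := by
    intro h
    rw [h, Finset.inter_self, hc T hT] at hST
    omega
  have hUcard : (S ∪ T).card = 7 := by
    have := Finset.card_union_add_card_inter S T
    rw [hc S hS, hc T hT, hST] at this
    omega
  have hZcard : (Finset.univ \ (S ∪ T)).card = 2 := by
    rw [Finset.card_sdiff_of_subset (Finset.subset_univ _), Finset.card_univ, h9, hUcard]
  obtain ⟨z1, hz1, z2, hz2, hz12⟩ := Finset.one_lt_card.mp (by rw [hZcard]; omega)
  rw [Finset.mem_sdiff, Finset.mem_union] at hz1 hz2
  push_neg at hz1 hz2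
  choose w hw using H2
  -- w z1 = y and w z2 = y
  have hwz1 : w z1 = y := by
    have h1 : w z1 ∈ S ∩ T := Finset.mem_inter.mpr
      ⟨(hw z1 S hS).resolve_left hz1.2.1, (hw z1 T hT).resolve_left hz1.2.2⟩
    rw [hy, Finset.mem_singleton] at h1
    exact h1
  have hwz2 : w z2 = y := by
    have h1 : w z2 ∈ S ∩ T := Finset.mem_inter.mpr
      ⟨(hw z2 S hS).resolve_left hz2.2.1, (hw z2 T hT).resolve_left hz2.2.2⟩
    rw [hy, Finset.mem_singleton] at h1
    exact h1
  obtain ⟨F, hF, hyF⟩ := H1 y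
  have hz1F : z1 ∈ F := by
    have := hw z1 F hF
    rw [hwz1] at this
    exact this.resolve_right hyF
  have hz2F : z2 ∈ F := by
    have := hw z2 F hF
    rw [hwz2] at this
    exact this.resolve_right hyF
  have hpair : ({z1, z2} : Finset V) ⊆ F := by
    intro x hx
    rw [Finset.mem_insert, Finset.mem_singleton] at hx
    rcases hx with rfl | rfl <;> assumption
  have hRcard : (F \ {z1, z2}).card = 2 := by
    rw [Finset.card_sdiff_of_subset hpair, hc F hF, Finset.card_pair hz12]
  have hFS : F ∩ S ⊆ F \ {z1, z2} := by
    intro x hx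
    rw [Finset.mem_inter] at hx
    rw [Finset.mem_sdiff, Finset.mem_insert, Finset.mem_singleton]
    refine ⟨hx.1, ?_⟩
    rintro (rfl | rfl)
    exacts [hz1.2.1 hx.2, hz2.2.1 hx.2]
  have hFT : F ∩ T ⊆ F \ {z1, z2} := by
    intro x hx
    rw [Finset.mem_inter] at hx
    rw [Finset.mem_sdiff, Finset.mem_insert, Finset.mem_singleton]
    refine ⟨hx.1, ?_⟩
    rintro (rfl | rfl)
    exacts [hz1.2.2 hx.2, hz2.2.2 hx.2]
  have hdisj : Disjoint (F ∩ S) (F ∩ T) := by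
    rw [Finset.disjoint_left]
    intro x hxS hxT
    have : x ∈ S ∩ T := Finset.mem_inter.mpr
      ⟨(Finset.mem_inter.mp hxS).2, (Finset.mem_inter.mp hxT).2⟩
    rw [hy, Finset.mem_singleton] at this
    exact hyF (this ▸ (Finset.mem_inter.mp hxS).1)
  have hsum : (F ∩ S).card + (F ∩ T).card ≤ 2 := by
    rw [← Finset.card_union_of_disjoint hdisj]
    calc ((F ∩ S) ∪ (F ∩ T)).card ≤ (F \ {z1, z2}).card :=
          Finset.card_le_card (Finset.union_subset hFS hFT)
      _ = 2 := hRcard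
  have hFSpos : 0 < (F ∩ S).card := Finset.card_pos.mpr (hint F S hF hS)
  have hFTpos : 0 < (F ∩ T).card := Finset.card_pos.mpr (hint F T hF hT)
  have hFS1 : (F ∩ S).card = 1 := by omega
  have hFT1 : (F ∩ T).card = 1 := by omega
  refine ⟨S, T, F, hS, hT, hF, hSTne, ?_, ?_, hST, ?_, ?_⟩
  · intro h
    exact hyF (h ▸ hyT)
  · intro h
    exact hyF (h ▸ hyS)
  · rw [Finset.inter_comm]; exact hFT1
  · rw [Finset.inter_comm]; exact hFS1

end Combo


/-- A 9-vertex forbidden induced subgraph for apex cographs has three pairwise distinct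
4-element subsets S, T, F, each inducing a P₄, pairwise intersecting in one vertex. -/
theorem forb_apex_cograph_nine_structure (V : Type) [Fintype V] [DecidableEq V]
    (G : SimpleGraph V) (h9 : Fintype.card V = 9) (hG : ForbApexCograph G) :
    ∃ S T F : Finset V, S ≠ T ∧ T ≠ F ∧ S ≠ F ∧
      S.card = 4 ∧ T.card = 4 ∧ F.card = 4 ∧
      Nonempty (G.induce (S : Set V) ≃g SimpleGraph.pathGraph 4) ∧
      Nonempty (G.induce (T : Set V) ≃g SimpleGraph.pathGraph 4) ∧
      Nonempty (G.induce (F : Set V) ≃g SimpleGraph.pathGraph 4) ∧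
      (S ∩ T).card = 1 ∧ (T ∩ F).card = 1 ∧ (S ∩ F).card = 1 := by
  classical
  have hH1 : ∀ v : V, ∃ S, P4s G S ∧ v ∉ S := by
    intro v
    have hnc : ¬ IsCograph (G.induce {u : V | u ≠ v}) := fun hcog => hG.1 (Or.inr ⟨v, hcog⟩)
    rw [IsCograph, not_isEmpty_iff] at hnc
    obtain ⟨f⟩ := hnc
    obtain ⟨S, hS, hsub⟩ := exists_p4s_of_emb G f
    refine ⟨S, hS, fun hv => ?_⟩
    exact (hsub (Finset.mem_coe.mpr hv) : v ≠ v) rfl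
  have hH2 : ∀ v : V, ∃ w : V, ∀ S, P4s G S → v ∈ S ∨ w ∈ S := by
    intro v
    have hne : ({u : V | u ≠ v} : Set V) ≠ Set.univ := by
      intro h
      have hv : v ∈ ({u : V | u ≠ v} : Set V) := h ▸ Set.mem_univ v
      exact hv rfl
    have hap := hG.2 _ hne
    rcases hap with hemp | ⟨w, hcog⟩
    · exfalso
      obtain ⟨u, hu⟩ := Fintype.exists_ne_of_one_lt_card (by rw [h9]; omega) v
      exact hemp.false ⟨u, hu⟩
    · refine ⟨(w : V), ?_⟩
      intro S hS
      by_contra hcon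
      push_neg at hcon
      apply hcog.false
      refine emb_of_p4s G hS.2 (s := {u : V | u ≠ v}) (t := {u | u ≠ w})
        (fun x hx h => hcon.1 (h ▸ (Finset.mem_coe.mp hx))) ?_
      intro x hx h
      apply hcon.2
      have hxw : x = (w : V) := congrArg Subtype.val h
      exact hxw ▸ hx
  obtain ⟨S, T, F, hS, hT, hF, hSTne, hTFne, hSFne, h1, h2, h3⟩ :=
    combo (P4s G) h9 (fun S h => h.1) hH1 hH2
  exact ⟨S, T, F, hSTne, hTFne, hSFne, hS.1, hT.1, hF.1, hS.2, hT.2, hF.2, h1, h2, h3⟩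
end

section
/- Let G be a 9-vertex forbidden induced subgraph for apex cographs with S = {α, s₁, s₂, β}, T = {α, t₁, t₂, γ}, F = {β, f₁, f₂, γ} subsets each inducing a P₄ and pairwise intersecting in one vertex, so V(G) = S ∪ T ∪ F. Then for each i ∈ {1,2}, the graph G − {α, f_i} is a cograph. -/
open SimpleGraph

def aux_embed {V : Type} (G : SimpleGraph V) {A s : Set V}
    (e : SimpleGraph.pathGraph 4 ↪g G.induce A)
    (hB : ∀ k, ((e k : A) : V) ∈ s) (v : s) (hw : ∀ k, ((e k : A) : V) ≠ (v : V)) :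
    SimpleGraph.pathGraph 4 ↪g (G.induce s).induce {u : s | u ≠ v} := by
  refine ⟨⟨fun k => ⟨⟨(e k : V), hB k⟩, fun h => hw k (congrArg Subtype.val h)⟩, ?_⟩, ?_⟩
  · intro a b h
    apply e.injective
    apply Subtype.val_injective
    exact congrArg (fun (x : {u : s | u ≠ v}) => ((x : s) : V)) h
  · intro a b
    exact e.map_rel_iff

lemma main_aux {V : Type} (G : SimpleGraph V) (hG : ForbApexCograph G) (α w : V)
    (Sf Tf : Finset V)
    (eS : SimpleGraph.pathGraph 4 ↪g G.induce (↑Sf : Set V))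
    (eT : SimpleGraph.pathGraph 4 ↪g G.induce (↑Tf : Set V))
    (hαS : α ∈ Sf) (hST : ∀ x, x ∈ Sf → x ∈ Tf → x = α)
    (hwS : w ∉ Sf) (hwT : w ∉ Tf) :
    IsCograph (G.induce ({α, w}ᶜ : Set V)) := by
  constructor
  intro e
  set P : Set V := Set.range (fun k => ((e k : ({α, w}ᶜ : Set V)) : V)) with hP
  set s : Set V := ↑Sf ∪ ↑Tf ∪ P with hs
  have heP : ∀ k, ((e k : ({α, w}ᶜ : Set V)) : V) ∈ s := fun k => Or.inr ⟨k, rfl⟩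
  have heα : ∀ k, ((e k : ({α, w}ᶜ : Set V)) : V) ≠ α := by
    intro k hk
    have := (e k).2
    simp [Set.mem_compl_iff, hk] at this
  have hws : w ∉ s := by
    rintro ((h | h) | ⟨k, hk⟩)
    · exact hwS (by simpa using h)
    · exact hwT (by simpa using h)
    · have := (e k).2
      simp [Set.mem_compl_iff, hk] at this
  have hsne : s ≠ Set.univ := fun h => hws (h ▸ Set.mem_univ w)
  rcases hG.2 s hsne with hemp | ⟨v, hv⟩
  · exact hemp.elim ⟨α, Or.inl (Or.inl (by simpa using hαS))⟩
  · by_cases hvα : (v : V) = α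
    · exact hv.elim (aux_embed G e heP v (fun k h => heα k (h.trans hvα)))
    · by_cases hvS : (v : V) ∈ Sf
      · have hvT : (v : V) ∉ Tf := fun h => hvα (hST _ hvS h)
        refine hv.elim (aux_embed G eT (fun k => Or.inl (Or.inr (eT k).2)) v ?_)
        intro k h
        exact hvT (by rw [← h]; exact (by simpa using (eT k).2))
      · refine hv.elim (aux_embed G eS (fun k => Or.inl (Or.inl (eS k).2)) v ?_)
        intro k h
        exact hvS (by rw [← h]; exact (by simpa using (eS k).2))

lemma card3 {V : Type} [DecidableEq V] (a b c : V) : ({a, b, c} : Finset V).card ≤ 3 := by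
  have h1 := Finset.card_insert_le a ({b, c} : Finset V)
  have h2 := Finset.card_insert_le b ({c} : Finset V)
  simp at h1 h2 ⊢
  omega

lemma four_distinct {V : Type} [DecidableEq V] {a b c d : V}
    (h : ({a, b, c, d} : Finset V).card = 4) : b ≠ a ∧ b ≠ d ∧ c ≠ a ∧ c ≠ d := by
  refine ⟨?_, ?_, ?_, ?_⟩ <;> intro he
  · rw [show ({a, b, c, d} : Finset V) = {a, c, d} from by ext x; simp [he]; try tauto] at h
    have := card3 a c d; omega
  · rw [show ({a, b, c, d} : Finset V) = {a, c, d} from by ext x; simp [he]; try tauto] at h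
    have := card3 a c d; omega
  · rw [show ({a, b, c, d} : Finset V) = {a, b, d} from by ext x; simp [he]; try tauto] at h
    have := card3 a b d; omega
  · rw [show ({a, b, c, d} : Finset V) = {a, b, d} from by ext x; simp [he]; try tauto] at h
    have := card3 a b d; omega

/-- In the 9-vertex setting with S = {α,s₁,s₂,β}, T = {α,t₁,t₂,γ}, F = {β,f₁,f₂,γ}
each inducing a P₄ and pairwise meeting in one vertex, G − {α, fᵢ} is a cograph. -/
theorem forb_apex_cograph_nine_two_deletion (V : Type) [Fintype V] [DecidableEq V]
    (G : SimpleGraph V) (h9 : Fintype.card V = 9) (hG : ForbApexCograph G)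
    (α β γ s₁ s₂ t₁ t₂ f₁ f₂ : V)
    (hS : Nonempty (G.induce (({α, s₁, s₂, β} : Finset V) : Set V) ≃g SimpleGraph.pathGraph 4))
    (hT : Nonempty (G.induce (({α, t₁, t₂, γ} : Finset V) : Set V) ≃g SimpleGraph.pathGraph 4))
    (hF : Nonempty (G.induce (({β, f₁, f₂, γ} : Finset V) : Set V) ≃g SimpleGraph.pathGraph 4))
    (hST : ({α, s₁, s₂, β} : Finset V) ∩ {α, t₁, t₂, γ} = {α})
    (hSF : ({α, s₁, s₂, β} : Finset V) ∩ {β, f₁, f₂, γ} = {β})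
    (hTF : ({α, t₁, t₂, γ} : Finset V) ∩ {β, f₁, f₂, γ} = {γ})
    (hcover : ({α, s₁, s₂, β} : Finset V) ∪ {α, t₁, t₂, γ} ∪ {β, f₁, f₂, γ} = Finset.univ) :
    IsCograph (G.induce ({α, f₁}ᶜ : Set V)) ∧ IsCograph (G.induce ({α, f₂}ᶜ : Set V)) := by
  obtain ⟨φS⟩ := hS
  obtain ⟨φT⟩ := hT
  obtain ⟨φF⟩ := hF
  have hFcard : ({β, f₁, f₂, γ} : Finset V).card = 4 := by
    have := Fintype.card_congr φF.toEquiv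
    simpa using this
  obtain ⟨hf₁β, hf₁γ, hf₂β, hf₂γ⟩ := four_distinct hFcard
  have hf₁S : f₁ ∉ ({α, s₁, s₂, β} : Finset V) := by
    intro h
    have : f₁ ∈ ({β} : Finset V) := by
      rw [← hSF]; exact Finset.mem_inter.mpr ⟨h, by simp⟩
    exact hf₁β (Finset.mem_singleton.mp this)
  have hf₂S : f₂ ∉ ({α, s₁, s₂, β} : Finset V) := by
    intro h
    have : f₂ ∈ ({β} : Finset V) := by
      rw [← hSF]; exact Finset.mem_inter.mpr ⟨h, by simp⟩
    exact hf₂β (Finset.mem_singleton.mp this)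
  have hf₁T : f₁ ∉ ({α, t₁, t₂, γ} : Finset V) := by
    intro h
    have : f₁ ∈ ({γ} : Finset V) := by
      rw [← hTF]; exact Finset.mem_inter.mpr ⟨h, by simp⟩
    exact hf₁γ (Finset.mem_singleton.mp this)
  have hf₂T : f₂ ∉ ({α, t₁, t₂, γ} : Finset V) := by
    intro h
    have : f₂ ∈ ({γ} : Finset V) := by
      rw [← hTF]; exact Finset.mem_inter.mpr ⟨h, by simp⟩
    exact hf₂γ (Finset.mem_singleton.mp this)
  have hSTprop : ∀ x, x ∈ ({α, s₁, s₂, β} : Finset V) → x ∈ ({α, t₁, t₂, γ} : Finset V) → x = α := by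
    intro x hx hy
    have : x ∈ ({α} : Finset V) := by
      rw [← hST]; exact Finset.mem_inter.mpr ⟨hx, hy⟩
    exact Finset.mem_singleton.mp this
  exact ⟨main_aux G hG α f₁ _ _ φS.symm.toEmbedding φT.symm.toEmbedding (by simp) hSTprop hf₁S hf₁T,
         main_aux G hG α f₂ _ _ φS.symm.toEmbedding φT.symm.toEmbedding (by simp) hSTprop hf₂S hf₂T⟩
end
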